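/- arXiv:1710.00244 — 13 statements merged into one kernel-verified Lean document; each statement's English description precedes it below -/
import Mathlib

section
/- If n is a positive integer and S is a set of (n-1)^2 + 1 points in the plane ℝ², then S contains n points that can be ordered so that both their x-coordinates and their y-coordinates form monotone sequences. -/
/-!
Order the plane coordinatewise. Mirsky's argument: if a finite poset has no chain of `r + 1`
elements, every height is `< r`, elements of equal height are pairwise incomparable, and by
pigeonhole some height is shared by more than `k` elements once there are more than `r * k`
elements. A chain of points is monotone in both coordinates; an antichain, listed in
lexicographic order, has nondecreasing first and decreasing second coordinates.
-/

open Function Finset Order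

theorem exists_strictMono_or_exists_isAntichain {α : Type*} [PartialOrder α] [Fintype α]
    {r k : ℕ} (h : r * k < Fintype.card α) :
    (∃ f : Fin (r + 1) → α, StrictMono f) ∨
      ∃ t : Finset α, #t = k + 1 ∧ IsAntichain (· ≤ ·) (t : Set α) := by
  refine or_iff_not_imp_left.mpr fun hchain => ?_
  have height_eq_natCast (a : α) : ∃ m < r, height a = m := by
    have hlt : height a < r := by
      by_contra! hle
      obtain ⟨p, -, rfl⟩ := exists_series_of_le_height a hle
      exact hchain ⟨p, p.strictMono⟩
    obtain ⟨m, hm⟩ := ENat.ne_top_iff_exists.mp hlt.ne_top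
    exact ⟨m, by rwa [← hm, Nat.cast_lt] at hlt, hm.symm⟩
  choose level level_lt height_eq using height_eq_natCast
  obtain ⟨j, -, hfiber⟩ := exists_lt_card_fiber_of_mul_lt_card_of_maps_to
    (s := univ) (t := range r) (fun a _ => mem_range.mpr (level_lt a)) (by simpa using h)
  obtain ⟨t, hts, htcard⟩ := exists_subset_card_eq hfiber
  refine ⟨t, htcard, fun a ha b hb hne hle => ?_⟩
  have hab := height_strictMono (hle.lt_of_ne hne) (height_eq a ▸ ENat.natCast_lt_top _)
  rw [height_eq, height_eq, Nat.cast_lt, (mem_filter.mp (hts ha)).2,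
    (mem_filter.mp (hts hb)).2] at hab
  exact hab.false

section
variable {α β : Type*} [LinearOrder α] [LinearOrder β]

lemma IsAntichain.snd_lt_of_toLex_lt {t : Set (α × β)} (ht : IsAntichain (· ≤ ·) t)
    {p q : α × β} (hp : p ∈ t) (hq : q ∈ t) (hpq : toLex p < toLex q) : q.2 < p.2 := by
  by_contra! hsnd
  exact ht hp hq (by rintro rfl; exact hpq.false)
    ⟨(Prod.Lex.toLex_lt_toLex'.mp hpq).1, hsnd⟩

lemma IsAntichain.exists_fst_monotone_snd_antitone {t : Finset (α × β)}
    (ht : IsAntichain (· ≤ ·) (t : Set (α × β))) {n : ℕ} (hn : #t = n) :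
    ∃ p : Fin n → α × β, Injective p ∧ (∀ i, p i ∈ t) ∧
      Monotone (fun i => (p i).1) ∧ Antitone (fun i => (p i).2) := by
  let T : Finset (α ×ₗ β) := t.map toLex.toEmbedding
  have hT : #T = n := by simpa [T] using hn
  let e := T.orderEmbOfFin hT
  have he (i : Fin n) : ofLex (e i) ∈ t := by simpa [T] using T.orderEmbOfFin_mem hT i
  refine ⟨fun i => ofLex (e i), fun i j hij => e.injective (ofLex.injective hij), he,
    fun i j hij => Prod.Lex.monotone_fst_ofLex (e.monotone hij), fun i j hij => ?_⟩
  rcases hij.eq_or_lt with rfl | hlt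
  · rfl
  · exact (ht.snd_lt_of_toLex_lt (he i) (he j) (e.strictMono hlt)).le

theorem Finset.exists_strictMono_or_exists_fst_monotone_snd_antitone (S : Finset (α × β))
    {r k : ℕ} (h : r * k < #S) :
    (∃ p : Fin (r + 1) → α × β, StrictMono p ∧ ∀ i, p i ∈ S) ∨
      ∃ p : Fin (k + 1) → α × β, Injective p ∧ (∀ i, p i ∈ S) ∧
        Monotone (fun i => (p i).1) ∧ Antitone (fun i => (p i).2) := by
  rcases exists_strictMono_or_exists_isAntichain (α := S) (by simpa using h) with
    ⟨f, hf⟩ | ⟨t, htcard, ht⟩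
  · exact .inl ⟨fun i => f i, (Subtype.strictMono_coe _).comp hf, fun i => (f i).2⟩
  · obtain ⟨p, hinj, hpt, hfst, hsnd⟩ := IsAntichain.exists_fst_monotone_snd_antitone
      (t := t.map (Embedding.subtype _))
      (by simpa using ht.image_embedding (OrderEmbedding.subtype _)) (by simpa using htcard)
    refine .inr ⟨p, hinj, fun i => ?_, hfst, hsnd⟩
    obtain ⟨a, -, ha⟩ := mem_map.mp (hpt i)
    exact ha ▸ a.2

end

theorem stmt_2 (n : ℕ) (hn : 1 ≤ n) (S : Finset (ℝ × ℝ))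
    (hS : S.card = (n - 1) ^ 2 + 1) :
    ∃ p : Fin n → ℝ × ℝ, Function.Injective p ∧ (∀ i, p i ∈ S) ∧
      (Monotone (fun i => (p i).1) ∨ Antitone (fun i => (p i).1)) ∧
      (Monotone (fun i => (p i).2) ∨ Antitone (fun i => (p i).2)) := by
  obtain ⟨m, rfl⟩ := Nat.exists_eq_add_of_le' hn
  rw [Nat.add_sub_cancel, sq] at hS
  rcases S.exists_strictMono_or_exists_fst_monotone_snd_antitone (r := m) (k := m)
    (hS ▸ Nat.lt_succ_self _) with ⟨p, hp, hpS⟩ | ⟨p, hinj, hpS, hfst, hsnd⟩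
  · exact ⟨p, hp.injective, hpS, .inl (monotone_fst.comp hp.monotone),
      .inl (monotone_snd.comp hp.monotone)⟩
  · exact ⟨p, hinj, hpS, .inl hfst, .inr hsnd⟩
end

section
/- If a connected graph G admits a monotone-geodesic labeling, then every general position set of G has at most 4 vertices, i.e., gp(G) ≤ 4. -/
/-!
By the Erdős–Szekeres theorem, any five points of the plane contain three that form a monotone
sequence: sort them by abscissa, and among the five ordinates some three (in that order) are
monotone. Under a monotone-geodesic labeling these three vertices lie on a common geodesic, so
they cannot all belong to a general position set.
-/

/-- A sequence of three points in ℝ² is monotone: both coordinate sequences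
are monotone. -/
def MonoTriple (a b c : ℝ × ℝ) : Prop :=
  ((a.1 ≤ b.1 ∧ b.1 ≤ c.1) ∨ (c.1 ≤ b.1 ∧ b.1 ≤ a.1)) ∧
  ((a.2 ≤ b.2 ∧ b.2 ≤ c.2) ∨ (c.2 ≤ b.2 ∧ b.2 ≤ a.2))

/-- A monotone-geodesic labeling of a graph. -/
def IsMonGeoLabeling {V : Type*} (G : SimpleGraph V) (f : V → ℝ × ℝ) : Prop :=
  Function.Injective f ∧
    ∀ x y z : V, MonoTriple (f x) (f y) (f z) →
      G.dist x z = G.dist x y + G.dist y z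

/-- General position set. -/
def IsGenPos {V : Type*} (G : SimpleGraph V) (S : Set V) : Prop :=
  ∀ u ∈ S, ∀ v ∈ S, ∀ w ∈ S, u ≠ v → v ≠ w → u ≠ w →
    G.dist u w ≠ G.dist u v + G.dist v w

theorem monoTriple_iff {a b c : ℝ × ℝ} :
    MonoTriple a b c ↔ b.1 ∈ Set.uIcc a.1 c.1 ∧ b.2 ∈ Set.uIcc a.2 c.2 := by
  simp only [MonoTriple, Set.mem_uIcc]

/-- Erdős–Szekeres for sequences of length five: without a monotone triple the sequence zigzags,
and then comparing `a 1` with `a 3` produces one. -/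
theorem exists_lt_lt_mem_uIcc {α : Type*} [LinearOrder α] (a : Fin 5 → α) :
    ∃ i j k, i < j ∧ j < k ∧ a j ∈ Set.uIcc (a i) (a k) := by
  by_contra! h
  have h012 := h 0 1 2 (by decide) (by decide)
  have h123 := h 1 2 3 (by decide) (by decide)
  have h234 := h 2 3 4 (by decide) (by decide)
  have h013 := h 0 1 3 (by decide) (by decide)
  have h134 := h 1 3 4 (by decide) (by decide)
  simp only [Set.mem_uIcc] at h012 h123 h234 h013 h134
  grind

theorem exists_monoTriple (p : Fin 5 → ℝ × ℝ) :
    ∃ i j k, i ≠ j ∧ j ≠ k ∧ i ≠ k ∧ MonoTriple (p i) (p j) (p k) := by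
  set σ := Tuple.sort (Prod.fst ∘ p)
  have hfst : Monotone ((Prod.fst ∘ p) ∘ σ) := Tuple.monotone_sort _
  obtain ⟨i, j, k, hij, hjk, hsnd⟩ := exists_lt_lt_mem_uIcc (Prod.snd ∘ p ∘ σ)
  exact ⟨σ i, σ j, σ k, σ.injective.ne hij.ne, σ.injective.ne hjk.ne,
    σ.injective.ne (hij.trans hjk).ne,
    monoTriple_iff.2 ⟨Set.mem_uIcc_of_le (hfst hij.le) (hfst hjk.le), hsnd⟩⟩

theorem IsGenPos.not_monoTriple {V : Type*} {G : SimpleGraph V} {S : Set V} {f : V → ℝ × ℝ}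
    (hS : IsGenPos G S) (hf : IsMonGeoLabeling G f) {u v w : V} (hu : u ∈ S) (hv : v ∈ S)
    (hw : w ∈ S) (huv : u ≠ v) (hvw : v ≠ w) (huw : u ≠ w) :
    ¬MonoTriple (f u) (f v) (f w) :=
  fun h ↦ hS u hu v hv w hw huv hvw huw (hf.2 u v w h)

theorem stmt_3_general {V : Type*} (G : SimpleGraph V)
    (f : V → ℝ × ℝ) (hf : IsMonGeoLabeling G f)
    (S : Set V) (hS : IsGenPos G S) :
    S.Finite ∧ S.ncard ≤ 4 := by
  rw [← Set.encard_le_coe_iff_finite_ncard_le]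
  by_contra! h
  have h5 : ((∅ : Set S).ncard : ℕ∞) + (5 : ℕ) ≤ ENat.card S := by
    rw [Set.ncard_empty, Nat.cast_zero, zero_add]
    exact Order.add_one_le_of_lt h
  obtain ⟨v, -⟩ := Fin.Embedding.exists_embedding_disjoint_range_of_add_le_ENat_card h5
  obtain ⟨i, j, k, hij, hjk, hik, hmono⟩ := exists_monoTriple (fun i ↦ f (v i))
  have hinj : Function.Injective (fun i ↦ (v i : V)) := Subtype.val_injective.comp v.injective
  exact hS.not_monoTriple hf (v i).2 (v j).2 (v k).2 (hinj.ne hij) (hinj.ne hjk) (hinj.ne hik)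
    hmono

theorem stmt_3 {V : Type*} (G : SimpleGraph V) (hG : G.Connected)
    (f : V → ℝ × ℝ) (hf : IsMonGeoLabeling G f)
    (S : Set V) (hS : IsGenPos G S) :
    S.Finite ∧ S.ncard ≤ 4 :=
  stmt_3_general G f hf S hS
end

section
/- If a connected graph G admits a monotone-geodesic labeling, then the clique number of G is at most 4. -/
section MonotoneTriple

variable {α : Type*} [LinearOrder α]

lemma exists_monotone_triple_of_fin_five_of_le (y : Fin 5 → α) (h13 : y 1 ≤ y 3) :
    ∃ i j k : Fin 5, i < j ∧ j < k ∧
      ((y i ≤ y j ∧ y j ≤ y k) ∨ (y k ≤ y j ∧ y j ≤ y i)) := by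
  rcases le_total (y 2) (y 3) with h23 | h32
  · rcases le_total (y 1) (y 2) with h12 | h21
    · exact ⟨1, 2, 3, by decide, by decide, .inl ⟨h12, h23⟩⟩
    rcases le_total (y 0) (y 2) with h02 | h20
    · exact ⟨0, 2, 3, by decide, by decide, .inl ⟨h02, h23⟩⟩
    rcases le_total (y 0) (y 1) with h01 | h10
    · exact ⟨0, 1, 3, by decide, by decide, .inl ⟨h01, h13⟩⟩
    · exact ⟨0, 1, 2, by decide, by decide, .inr ⟨h21, h10⟩⟩
  · rcases le_total (y 3) (y 4) with h34 | h43
    · exact ⟨1, 3, 4, by decide, by decide, .inl ⟨h13, h34⟩⟩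
    · exact ⟨2, 3, 4, by decide, by decide, .inr ⟨h43, h32⟩⟩

lemma exists_monotone_triple_of_fin_five (y : Fin 5 → α) :
    ∃ i j k : Fin 5, i < j ∧ j < k ∧
      ((y i ≤ y j ∧ y j ≤ y k) ∨ (y k ≤ y j ∧ y j ≤ y i)) := by
  rcases le_total (y 1) (y 3) with h13 | h31
  · exact exists_monotone_triple_of_fin_five_of_le y h13
  obtain ⟨i, j, k, hij, hjk, hmono⟩ :=
    exists_monotone_triple_of_fin_five_of_le (OrderDual.toDual ∘ y) h31
  exact ⟨i, j, k, hij, hjk, hmono.symm.imp And.symm And.symm⟩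

end MonotoneTriple

lemma exists_monoTriple_of_five_le_card {ι : Type*} (s : Finset ι) (p : ι → ℝ × ℝ)
    (hs : 5 ≤ s.card) :
    ∃ a ∈ s, ∃ b ∈ s, ∃ c ∈ s, a ≠ b ∧ b ≠ c ∧ a ≠ c ∧ MonoTriple (p a) (p b) (p c) := by
  let e : Fin 5 ↪ ι :=
    ((Fin.castLEEmb hs).trans s.equivFin.symm.toEmbedding).trans (.subtype _)
  have he : ∀ i, e i ∈ s := fun i => (s.equivFin.symm _).2
  let σ := Tuple.sort fun i => (p (e i)).1
  have hfst : Monotone fun i => (p (e (σ i))).1 := Tuple.monotone_sort fun i => (p (e i)).1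
  obtain ⟨i, j, k, hij, hjk, hsnd⟩ :=
    exists_monotone_triple_of_fin_five fun i => (p (e (σ i))).2
  have hne {l m : Fin 5} (h : l < m) : e (σ l) ≠ e (σ m) :=
    (e.injective.comp σ.injective).ne h.ne
  exact ⟨_, he _, _, he _, _, he _, hne hij, hne hjk, hne (hij.trans hjk),
    .inl ⟨hfst hij.le, hfst hjk.le⟩, hsnd⟩

lemma IsMonGeoLabeling.not_monoTriple_of_adj {V : Type*} {G : SimpleGraph V}
    {f : V → ℝ × ℝ} (hf : IsMonGeoLabeling G f) {u v w : V}
    (huv : G.Adj u v) (hvw : G.Adj v w) (huw : G.Adj u w) :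
    ¬ MonoTriple (f u) (f v) (f w) := fun hmono => by
  have hgeo := hf.2 u v w hmono
  rw [SimpleGraph.dist_eq_one_iff_adj.2 huv, SimpleGraph.dist_eq_one_iff_adj.2 hvw,
    SimpleGraph.dist_eq_one_iff_adj.2 huw] at hgeo
  omega

theorem stmt_4_general {V : Type*} (G : SimpleGraph V)
    (f : V → ℝ × ℝ) (hf : IsMonGeoLabeling G f)
    (K : Finset V) (hK : G.IsClique (K : Set V)) :
    K.card ≤ 4 := by
  by_contra! hcard
  obtain ⟨a, ha, b, hb, c, hc, hab, hbc, hac, hmono⟩ := exists_monoTriple_of_five_le_card K f hcard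
  exact hf.not_monoTriple_of_adj (hK ha hb hab) (hK hb hc hbc) (hK ha hc hac) hmono

theorem stmt_4 {V : Type*} (G : SimpleGraph V) (hG : G.Connected)
    (f : V → ℝ × ℝ) (hf : IsMonGeoLabeling G f)
    (K : Finset V) (hK : G.IsClique (K : Set V)) :
    K.card ≤ 4 :=
  stmt_4_general G f hf K hK
end

section
/- The general position number of the infinite 2-dimensional grid P_∞ □ P_∞ (the graph on ℤ² with edges between points at L¹-distance 1) equals 4. -/
/-- Graph distance in the infinite 2-dim grid on ℤ² (L¹ distance). -/
def gridDist (p q : ℤ × ℤ) : ℕ := (p.1 - q.1).natAbs + (p.2 - q.2).natAbs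

/-- General position set with respect to a distance function. -/
def IsGenPosDist {V : Type*} (d : V → V → ℕ) (S : Set V) : Prop :=
  ∀ u ∈ S, ∀ v ∈ S, ∀ w ∈ S, u ≠ v → v ≠ w → u ≠ w →
    d u w ≠ d u v + d v w

/-!
Every point of the box `[[u, w]]` (for the componentwise order on `ℤ × ℤ`) lies on a geodesic
from `u` to `w`. Given five points in general position, let `a` and `e` have minimal and maximal
first coordinate. Each of the other three points lies between them in the first coordinate, so
its second coordinate is strictly above or strictly below both `a.2` and `e.2`. Two of them, say
`r` and `s` with `r.1 ≤ s.1`, are on the same side, and then `r ∈ [[a, s]]` or `s ∈ [[r, e]]`.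
The four points `(0, 1), (1, 3), (2, 0), (3, 2)` are in general position.
-/

open Set
open scoped Interval

theorem Set.finite_and_ncard_le_of_forall_finset_card_le {α : Type*} {s : Set α} {n : ℕ}
    (h : ∀ t : Finset α, ↑t ⊆ s → t.card ≤ n) : s.Finite ∧ s.ncard ≤ n := by
  have hs : s.Finite := by
    by_contra hinf
    obtain ⟨t, hts, ht⟩ := Infinite.exists_subset_card_eq hinf (n + 1)
    have := h t hts
    omega
  refine ⟨hs, ?_⟩
  rw [ncard_eq_toFinset_card s hs]
  exact h _ (by simp)

instance IsGenPosDist.decidableCoeFinset {V : Type*} [DecidableEq V] (d : V → V → ℕ)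
    (S : Finset V) : Decidable (IsGenPosDist d (S : Set V)) :=
  decidable_of_iff (∀ u ∈ S, ∀ v ∈ S, ∀ w ∈ S, u ≠ v → v ≠ w → u ≠ w →
    d u w ≠ d u v + d v w) Iff.rfl

theorem IsGenPosDist.mono {V : Type*} {d : V → V → ℕ} {S T : Set V} (hS : IsGenPosDist d S)
    (hT : T ⊆ S) : IsGenPosDist d T :=
  fun u hu v hv w hw => hS u (hT hu) v (hT hv) w (hT hw)

theorem gridDist_eq_add_of_mem_uIcc {u v w : ℤ × ℤ} (h : v ∈ [[u, w]]) :
    gridDist u w = gridDist u v + gridDist v w := by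
  rw [uIcc_prod_eq, mem_prod, mem_uIcc, mem_uIcc] at h
  simp only [gridDist]
  omega

theorem IsGenPosDist.notMem_uIcc {S : Set (ℤ × ℤ)} (hS : IsGenPosDist gridDist S)
    {u v w : ℤ × ℤ} (hu : u ∈ S) (hv : v ∈ S) (hw : w ∈ S) (huv : u ≠ v) (hvw : v ≠ w) :
    v ∉ [[u, w]] := by
  intro h
  obtain rfl | huw := eq_or_ne u w
  · rw [uIcc_self, mem_singleton_iff] at h
    exact huv h.symm
  · exact hS u hu v hv w hw huv hvw huw (gridDist_eq_add_of_mem_uIcc h)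

theorem mem_uIcc_or_mem_uIcc_of_sameSide {a r s e : ℤ × ℤ}
    (hx : a.1 ≤ r.1 ∧ r.1 ≤ s.1 ∧ s.1 ≤ e.1)
    (hr : r.2 ∉ [[a.2, e.2]]) (hs : s.2 ∉ [[a.2, e.2]]) (hrs : a.2 < r.2 ↔ a.2 < s.2) :
    r ∈ [[a, s]] ∨ s ∈ [[r, e]] := by
  simp only [uIcc_prod_eq, mem_prod, mem_uIcc] at hr hs ⊢
  omega

theorem IsGenPosDist.card_le_four {T : Finset (ℤ × ℤ)}
    (hT : IsGenPosDist gridDist (T : Set (ℤ × ℤ))) : T.card ≤ 4 := by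
  by_contra! h5
  obtain ⟨a, ha, hmin⟩ := T.exists_min_image Prod.fst (Finset.card_pos.mp (by omega))
  obtain ⟨e, he, hmax⟩ := T.exists_max_image Prod.fst (Finset.card_pos.mp (by omega))
  set M := (T.erase a).erase e
  have hmem {p : ℤ × ℤ} (hp : p ∈ M) : p ≠ e ∧ p ≠ a ∧ p ∈ T := by
    simpa only [M, Finset.mem_erase, and_assoc] using hp
  have hM : 2 < M.card := by
    have h1 : (T.erase a).card - 1 ≤ M.card := Finset.pred_card_le_card_erase
    have h2 : T.card - 1 ≤ (T.erase a).card := Finset.pred_card_le_card_erase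
    omega
  have hout {p : ℤ × ℤ} (hp : p ∈ M) : p.2 ∉ [[a.2, e.2]] := by
    obtain ⟨hpe, hpa, hpT⟩ := hmem hp
    intro hp2
    refine hT.notMem_uIcc ha hpT he hpa.symm hpe ?_
    rw [uIcc_prod_eq]
    exact ⟨Icc_subset_uIcc ⟨hmin p hpT, hmax p hpT⟩, hp2⟩
  obtain ⟨r, hr, s, hs, hrs, hside⟩ := Finset.exists_ne_map_eq_of_card_lt_of_maps_to
    (t := Finset.univ) (f := fun p : ℤ × ℤ => decide (a.2 < p.2)) (by simpa using hM)
    (fun _ _ => Finset.mem_coe.2 (Finset.mem_univ _))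
  wlog hle : r.1 ≤ s.1 generalizing r s
  · exact this s hs r hr hrs.symm hside.symm (by omega)
  obtain ⟨-, hra, hrT⟩ := hmem hr
  obtain ⟨hse, -, hsT⟩ := hmem hs
  rcases mem_uIcc_or_mem_uIcc_of_sameSide ⟨hmin r hrT, hle, hmax s hsT⟩ (hout hr) (hout hs)
    (by simpa using hside) with h | h
  · exact hT.notMem_uIcc ha hrT hsT hra.symm hrs h
  · exact hT.notMem_uIcc hrT hsT he hrs hse h

/-- gp(P∞ □ P∞) = 4. -/
theorem stmt_6 :
    (∃ S : Finset (ℤ × ℤ), IsGenPosDist gridDist (S : Set (ℤ × ℤ)) ∧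
      S.card = 4) ∧
    (∀ S : Set (ℤ × ℤ), IsGenPosDist gridDist S → S.Finite ∧ S.ncard ≤ 4) := by
  refine ⟨⟨{(0, 1), (1, 3), (2, 0), (3, 2)}, by decide, rfl⟩, fun S hS => ?_⟩
  exact finite_and_ncard_le_of_forall_finset_card_le fun _ ht => (hS.mono ht).card_le_four
end

section
/- In the graph on ℤ² where two points are adjacent iff they differ by at most 1 in each coordinate and are distinct (the strong product P_∞ ⊠ P_∞, i.e., L∞ distance), the labeling g obtained by rotating coordinates by 45 degrees, g(i,j) = (i+j, j-i), is a monotone-geodesic labeling. -/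
/-!
The rotation `(i, j) ↦ (i + j, j - i)` turns the Chebyshev distance into half the `ℓ¹` distance of
the labels, because `2 * max |a| |b| = |a + b| + |a - b|`. The `ℓ¹` distance is additive along any
triple whose labels are monotone in each coordinate, since `|a - c| = |a - b| + |b - c|` whenever
`b` lies between `a` and `c`.
-/

/-- Graph distance in the infinite diagonal grid (king graph) on ℤ²:
the L∞ (Chebyshev) distance. -/
def kingDist (p q : ℤ × ℤ) : ℕ := max (p.1 - q.1).natAbs (p.2 - q.2).natAbs

/-- The 45°-rotated labeling. -/
def rotLabel (p : ℤ × ℤ) : ℤ × ℤ := (p.1 + p.2, p.2 - p.1)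

lemma abs_sub_eq_abs_sub_add_abs_sub_of_between {α : Type*} [AddCommGroup α] [LinearOrder α]
    [IsOrderedAddMonoid α] {a b c : α} (h : (a ≤ b ∧ b ≤ c) ∨ (c ≤ b ∧ b ≤ a)) :
    |a - c| = |a - b| + |b - c| := by
  rcases h with ⟨hab, hbc⟩ | ⟨hcb, hba⟩
  · rw [abs_of_nonpos (sub_nonpos.2 (hab.trans hbc)), abs_of_nonpos (sub_nonpos.2 hab),
      abs_of_nonpos (sub_nonpos.2 hbc)]
    abel
  · rw [abs_of_nonneg (sub_nonneg.2 (hcb.trans hba)), abs_of_nonneg (sub_nonneg.2 hba),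
      abs_of_nonneg (sub_nonneg.2 hcb)]
    abel

lemma two_mul_max_abs_eq_abs_add_add_abs_sub {α : Type*} [CommRing α] [LinearOrder α]
    [IsStrictOrderedRing α] (a b : α) : 2 * max |a| |b| = |a + b| + |a - b| := by
  rcases abs_cases a with ha | ha <;> rcases abs_cases b with hb | hb <;>
    rcases abs_cases (a + b) with hs | hs <;> rcases abs_cases (a - b) with hd | hd <;>
    rcases max_cases |a| |b| with hm | hm <;>
    linarith [ha.2, hb.2, hs.2, hd.2, hm.2]

lemma two_mul_kingDist (p q : ℤ × ℤ) :
    2 * (kingDist p q : ℤ) =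
      |(rotLabel p).1 - (rotLabel q).1| + |(rotLabel p).2 - (rotLabel q).2| := by
  simp only [kingDist, rotLabel, Nat.cast_max, Int.natCast_natAbs]
  rw [max_comm, two_mul_max_abs_eq_abs_add_add_abs_sub]
  congr 2 <;> ring

/-- The rotated labeling is monotone-geodesic for the diagonal grid: if the
labels of three vertices are monotone in both coordinates, the vertices lie
on a common geodesic. -/
theorem stmt_7 (u v w : ℤ × ℤ)
    (hx : ((rotLabel u).1 ≤ (rotLabel v).1 ∧ (rotLabel v).1 ≤ (rotLabel w).1) ∨
          ((rotLabel w).1 ≤ (rotLabel v).1 ∧ (rotLabel v).1 ≤ (rotLabel u).1))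
    (hy : ((rotLabel u).2 ≤ (rotLabel v).2 ∧ (rotLabel v).2 ≤ (rotLabel w).2) ∨
          ((rotLabel w).2 ≤ (rotLabel v).2 ∧ (rotLabel v).2 ≤ (rotLabel u).2)) :
    kingDist u w = kingDist u v + kingDist v w := by
  zify
  refine mul_left_cancel₀ (two_ne_zero : (2 : ℤ) ≠ 0) ?_
  rw [mul_add, two_mul_kingDist, two_mul_kingDist, two_mul_kingDist,
    abs_sub_eq_abs_sub_add_abs_sub_of_between hx, abs_sub_eq_abs_sub_add_abs_sub_of_between hy]
  ring
end

section
/- The general position number of the infinite 2-dimensional diagonal grid (the graph on ℤ² with distance given by the L∞ metric, i.e., the strong product of two two-way infinite paths) equals 4. -/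
namespace IsGenPosDist

variable {V : Type*} {d : V → V → ℕ} {S : Set V}

theorem of_forall_dist_eq {c : ℕ} (hc : 0 < c) (h : ∀ u ∈ S, ∀ v ∈ S, u ≠ v → d u v = c) :
    IsGenPosDist d S := by
  intro u hu v hv w hw huv hvw huw
  rw [h u hu w hw huw, h u hu v hv huv, h v hv w hw hvw]
  omega

theorem not_exists_rel_of_rel (hS : IsGenPosDist d S) {R : V → V → Prop} [IsStrictOrder V R]
    (hR : ∀ {u v w}, R u v → R v w → d u w = d u v + d v w) {u v : V} (hu : u ∈ S) (hv : v ∈ S)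
    (huv : R u v) : ¬∃ w ∈ S, R w u := by
  rintro ⟨w, hw, hwu⟩
  exact hS w hw u hu v hv (ne_of_irrefl hwu) (ne_of_irrefl huv)
    (ne_of_irrefl (_root_.trans hwu huv)) (hR hwu huv)

theorem injOn_exists_rel (hS : IsGenPosDist d S) {R₁ R₂ : V → V → Prop}
    [IsStrictOrder V R₁] [IsStrictOrder V R₂]
    (hR₁ : ∀ {u v w}, R₁ u v → R₁ v w → d u w = d u v + d v w)
    (hR₂ : ∀ {u v w}, R₂ u v → R₂ v w → d u w = d u v + d v w)
    (htotal : ∀ {u v}, u ≠ v → R₁ u v ∨ R₁ v u ∨ R₂ u v ∨ R₂ v u) :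
    Set.InjOn (fun v ↦ ((∃ w ∈ S, R₁ w v), (∃ w ∈ S, R₂ w v))) S := by
  intro u hu v hv huv
  simp only [Prod.mk.injEq] at huv
  by_contra hne
  rcases htotal hne with h | h | h | h
  · exact hS.not_exists_rel_of_rel hR₁ hu hv h (huv.1 ▸ ⟨u, hu, h⟩)
  · exact hS.not_exists_rel_of_rel hR₁ hv hu h (huv.1 ▸ ⟨v, hv, h⟩)
  · exact hS.not_exists_rel_of_rel hR₂ hu hv h (huv.2 ▸ ⟨u, hu, h⟩)
  · exact hS.not_exists_rel_of_rel hR₂ hv hu h (huv.2 ▸ ⟨v, hv, h⟩)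

theorem finite_and_ncard_le_four (hS : IsGenPosDist d S) {R₁ R₂ : V → V → Prop}
    [IsStrictOrder V R₁] [IsStrictOrder V R₂]
    (hR₁ : ∀ {u v w}, R₁ u v → R₁ v w → d u w = d u v + d v w)
    (hR₂ : ∀ {u v w}, R₂ u v → R₂ v w → d u w = d u v + d v w)
    (htotal : ∀ {u v}, u ≠ v → R₁ u v ∨ R₁ v u ∨ R₂ u v ∨ R₂ v u) :
    S.Finite ∧ S.ncard ≤ 4 := by
  have hinj := hS.injOn_exists_rel hR₁ hR₂ htotal
  refine ⟨.of_injOn (Set.mapsTo_univ _ _) hinj Set.finite_univ, ?_⟩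
  calc S.ncard ≤ (Set.univ : Set (Prop × Prop)).ncard :=
        Set.ncard_le_ncard_of_injOn _ (fun _ _ ↦ Set.mem_univ _) hinj
    _ = 4 := by simp [Nat.card_eq_fintype_card]

end IsGenPosDist

def HorizPrecedes (p q : ℤ × ℤ) : Prop :=
  p.1 < q.1 ∧ (q.2 - p.2).natAbs ≤ (q.1 - p.1).natAbs

instance : IsStrictOrder (ℤ × ℤ) HorizPrecedes where
  irrefl p h := lt_irrefl _ h.1
  trans p q r hpq hqr := by unfold HorizPrecedes at *; omega

theorem kingDist_swap (p q : ℤ × ℤ) : kingDist p.swap q.swap = kingDist p q :=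
  max_comm _ _

theorem kingDist_eq_add_of_horizPrecedes {u v w : ℤ × ℤ} (huv : HorizPrecedes u v)
    (hvw : HorizPrecedes v w) : kingDist u w = kingDist u v + kingDist v w := by
  unfold HorizPrecedes at *
  unfold kingDist
  omega

theorem kingDist_eq_add_of_swap_horizPrecedes {u v w : ℤ × ℤ}
    (huv : (Prod.swap ⁻¹'o HorizPrecedes) u v) (hvw : (Prod.swap ⁻¹'o HorizPrecedes) v w) :
    kingDist u w = kingDist u v + kingDist v w := by
  simpa only [kingDist_swap] using kingDist_eq_add_of_horizPrecedes huv hvw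

theorem horizPrecedes_or_swap_horizPrecedes {u v : ℤ × ℤ} (huv : u ≠ v) :
    HorizPrecedes u v ∨ HorizPrecedes v u ∨
      (Prod.swap ⁻¹'o HorizPrecedes) u v ∨ (Prod.swap ⁻¹'o HorizPrecedes) v u := by
  simp only [Order.Preimage, HorizPrecedes, Prod.fst_swap, Prod.snd_swap]
  rw [Ne, Prod.ext_iff] at huv
  omega

theorem isGenPosDist_kingDist_unitSquare :
    IsGenPosDist kingDist (({(0, 0), (0, 1), (1, 0), (1, 1)} : Finset (ℤ × ℤ)) : Set (ℤ × ℤ)) :=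
  .of_forall_dist_eq one_pos (by decide)

/-- gp(P∞ ⊠ P∞) = 4. -/
theorem stmt_8 :
    (∃ S : Finset (ℤ × ℤ), IsGenPosDist kingDist (S : Set (ℤ × ℤ)) ∧
      S.card = 4) ∧
    (∀ S : Set (ℤ × ℤ), IsGenPosDist kingDist S → S.Finite ∧ S.ncard ≤ 4) :=
  ⟨⟨_, isGenPosDist_kingDist_unitSquare, rfl⟩, fun _ hS ↦ hS.finite_and_ncard_le_four
    kingDist_eq_add_of_horizPrecedes kingDist_eq_add_of_swap_horizPrecedes
    horizPrecedes_or_swap_horizPrecedes⟩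
end

section
/- Let G be a connected graph and S a set of vertices. If there exists a positive integer k such that k ≤ d(x,y) < 2k holds for every pair of distinct vertices x, y ∈ S, then S is a general position set of G. -/
theorem stmt_9_general {V : Type*} (G : SimpleGraph V)
    (S : Set V) (k : ℕ)
    (h : ∀ x ∈ S, ∀ y ∈ S, x ≠ y → k ≤ G.dist x y ∧ G.dist x y < 2 * k) :
    IsGenPos G S := by
  intro u hu v hv w hw huv hvw huw
  have huv_ge : k ≤ G.dist u v := (h u hu v hv huv).1
  have hvw_ge : k ≤ G.dist v w := (h v hv w hw hvw).1
  have huw_lt : G.dist u w < 2 * k := (h u hu w hw huw).2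
  omega

theorem stmt_9 {V : Type*} (G : SimpleGraph V) (hG : G.Connected)
    (S : Set V) (k : ℕ) (hk : 0 < k)
    (h : ∀ x ∈ S, ∀ y ∈ S, x ≠ y → k ≤ G.dist x y ∧ G.dist x y < 2 * k) :
    IsGenPos G S :=
  stmt_9_general G S k h
end

section
/- In the infinite 3-dimensional grid graph on ℤ³ (graph distance = L¹ distance), the 10-point set S = {(2,2,0), (3,1,1), (1,3,1), (2,0,2), (0,2,2), (4,2,2), (2,4,2), (1,1,3), (3,3,3), (2,2,4)} satisfies 3 ≤ d(x,y) ≤ 5 for all distinct x, y ∈ S, and hence S is a general position set; consequently gp(P_∞^{□,3}) ≥ 10. -/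
/-- Graph distance in the infinite 3-dim grid on ℤ³ (L¹ distance). -/
def grid3Dist (p q : ℤ × ℤ × ℤ) : ℕ :=
  (p.1 - q.1).natAbs + (p.2.1 - q.2.1).natAbs + (p.2.2 - q.2.2).natAbs

/-- The explicit 10-point set in ℤ³. -/
def S10 : Finset (ℤ × ℤ × ℤ) :=
  {(2,2,0), (3,1,1), (1,3,1), (2,0,2), (0,2,2),
   (4,2,2), (2,4,2), (1,1,3), (3,3,3), (2,2,4)}

/-- Two distances that are each at least `k` sum to at least `2 * k`, which no distance reaches. -/
theorem isGenPosDist_of_forall_le_dist_lt {V : Type*} (d : V → V → ℕ) (S : Set V) (k : ℕ)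
    (h : ∀ x ∈ S, ∀ y ∈ S, x ≠ y → k ≤ d x y ∧ d x y < 2 * k) : IsGenPosDist d S := by
  intro u hu v hv w hw huv hvw huw
  have huv' := h u hu v hv huv
  have hvw' := h v hv w hw hvw
  have huw' := h u hu w hw huw
  omega

theorem stmt_10 :
    (∀ x ∈ S10, ∀ y ∈ S10, x ≠ y →
        3 ≤ grid3Dist x y ∧ grid3Dist x y ≤ 5) ∧
    IsGenPosDist grid3Dist (S10 : Set (ℤ × ℤ × ℤ)) ∧
    S10.card = 10 := by
  have hdist : ∀ x ∈ S10, ∀ y ∈ S10, x ≠ y →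
      3 ≤ grid3Dist x y ∧ grid3Dist x y ≤ 5 := by decide
  refine ⟨hdist, ?_, by decide⟩
  exact isGenPosDist_of_forall_le_dist_lt grid3Dist _ 3 fun x hx y hy hxy =>
    (hdist x hx y hy hxy).imp_right Nat.lt_succ_of_le
end

section
/- Every set of 17 points in ℤ³ contains three distinct points that lie on a common geodesic of the 3-dimensional grid graph; hence the general position number of the infinite 3-dimensional grid on ℤ³ is at most 16. -/
/-!
Order the points lexicographically, so that the first coordinate is monotone along the order.
By Erdős–Szekeres (any `m * n + 1` values contain a monotone run of `m + 1` or an antitone run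
of `n + 1`), 17 = 4² + 1 points contain 5 along which the second coordinate is monotone or
antitone, and among those 5 = 2² + 1 there are 3 along which the third one is as well. For the
middle one of these three points, every coordinate lies between those of the outer two, which
is exactly the case of equality in the triangle inequality for the L¹ distance.

Erdős–Szekeres is proved by the usual labelling: each `i` gets the pair of lengths of the longest
monotone and antitone chains ending at `i`; these pairs are distinct, since for `i < j` one of
the two chains ending at `i` extends by `j`.
-/

open Finset OrderDual

section ErdosSzekeres

variable {ι β : Type*} [LinearOrder ι] [LinearOrder β]

open scoped Classical in
noncomputable def monotoneChainsEndingAt (f : ι → β) (s : Finset ι) (i : ι) :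
    Finset (Finset ι) :=
  s.powerset.filter fun t => MonotoneOn f t ∧ IsGreatest (t : Set ι) i

lemma mem_monotoneChainsEndingAt {f : ι → β} {s t : Finset ι} {i : ι} :
    t ∈ monotoneChainsEndingAt f s i ↔ t ⊆ s ∧ MonotoneOn f t ∧ IsGreatest (t : Set ι) i := by
  simp [monotoneChainsEndingAt]

noncomputable def longestMonotoneEndingAt (f : ι → β) (s : Finset ι) (i : ι) : ℕ :=
  (monotoneChainsEndingAt f s i).sup card

lemma exists_monotoneOn_card_eq_longestMonotoneEndingAt (f : ι → β) {s : Finset ι} {i : ι}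
    (hi : i ∈ s) :
    ∃ t ⊆ s, MonotoneOn f t ∧ IsGreatest (t : Set ι) i ∧
      t.card = longestMonotoneEndingAt f s i := by
  have hsingleton : {i} ∈ monotoneChainsEndingAt f s i := by
    simp [mem_monotoneChainsEndingAt, hi, Set.subsingleton_singleton.monotoneOn,
      isGreatest_singleton]
  obtain ⟨t, ht, hsup⟩ := exists_mem_eq_sup _ ⟨_, hsingleton⟩ card
  obtain ⟨hts, hmono, hgreatest⟩ := mem_monotoneChainsEndingAt.1 ht
  exact ⟨t, hts, hmono, hgreatest, hsup.symm⟩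

lemma longestMonotoneEndingAt_pos (f : ι → β) {s : Finset ι} {i : ι} (hi : i ∈ s) :
    0 < longestMonotoneEndingAt f s i := by
  obtain ⟨t, -, -, hgreatest, hcard⟩ := exists_monotoneOn_card_eq_longestMonotoneEndingAt f hi
  exact hcard ▸ card_pos.2 ⟨i, hgreatest.1⟩

lemma exists_monotoneOn_card_eq_of_le_longestMonotoneEndingAt {f : ι → β} {s : Finset ι}
    {i : ι} {k : ℕ} (hi : i ∈ s) (hk : k ≤ longestMonotoneEndingAt f s i) :
    ∃ t ⊆ s, t.card = k ∧ MonotoneOn f t := by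
  obtain ⟨t, hts, hmono, -, hcard⟩ := exists_monotoneOn_card_eq_longestMonotoneEndingAt f hi
  obtain ⟨u, hut, hu⟩ := exists_subset_card_eq (hcard ▸ hk : k ≤ t.card)
  exact ⟨u, hut.trans hts, hu, hmono.mono (coe_subset.2 hut)⟩

lemma longestMonotoneEndingAt_lt {f : ι → β} {s : Finset ι} {i j : ι} (hi : i ∈ s) (hj : j ∈ s)
    (hij : i < j) (hf : f i ≤ f j) :
    longestMonotoneEndingAt f s i < longestMonotoneEndingAt f s j := by
  obtain ⟨t, hts, hmono, hgreatest, hcard⟩ :=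
    exists_monotoneOn_card_eq_longestMonotoneEndingAt f hi
  have hjt : j ∉ t := fun hjt => (hgreatest.2 hjt).not_gt hij
  have hextend : insert j t ∈ monotoneChainsEndingAt f s j := by
    refine mem_monotoneChainsEndingAt.2 ⟨insert_subset hj hts, ?_, ?_⟩
    · have hle : ∀ k ∈ t, f k ≤ f j := fun k hk =>
        (hmono hk hgreatest.1 (hgreatest.2 hk)).trans hf
      rw [coe_insert]
      rintro a (rfl | ha) b (rfl | hb) hab
      · exact le_rfl
      · exact absurd ((hab.trans (hgreatest.2 hb)).trans_lt hij) (lt_irrefl a)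
      · exact hle a ha
      · exact hmono ha hb hab
    · simpa [max_eq_left hij.le] using hgreatest.insert j
  calc longestMonotoneEndingAt f s i = t.card := hcard.symm
    _ < (insert j t).card := by rw [card_insert_of_notMem hjt]; omega
    _ ≤ longestMonotoneEndingAt f s j := le_sup hextend

lemma longestMonotoneEndingAt_lt_or_lt (f : ι → β) {s : Finset ι} {i j : ι} (hi : i ∈ s)
    (hj : j ∈ s) (hij : i < j) :
    longestMonotoneEndingAt f s i < longestMonotoneEndingAt f s j ∨
      longestMonotoneEndingAt (toDual ∘ f) s i < longestMonotoneEndingAt (toDual ∘ f) s j := by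
  rcases le_or_gt (f i) (f j) with hf | hf
  · exact .inl (longestMonotoneEndingAt_lt hi hj hij hf)
  · exact .inr (longestMonotoneEndingAt_lt hi hj hij (toDual_le_toDual.2 hf.le))

theorem erdos_szekeres (f : ι → β) (s : Finset ι) (m n : ℕ) (h : m * n < s.card) :
    ∃ t ⊆ s, (t.card = m + 1 ∧ MonotoneOn f t) ∨ (t.card = n + 1 ∧ AntitoneOn f t) := by
  suffices ∃ i ∈ s, m < longestMonotoneEndingAt f s i ∨
      n < longestMonotoneEndingAt (toDual ∘ f) s i by
    obtain ⟨i, hi, hlong | hlong⟩ := this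
    · obtain ⟨t, hts, hcard, hmono⟩ :=
        exists_monotoneOn_card_eq_of_le_longestMonotoneEndingAt hi hlong
      exact ⟨t, hts, .inl ⟨hcard, hmono⟩⟩
    · obtain ⟨t, hts, hcard, hmono⟩ :=
        exists_monotoneOn_card_eq_of_le_longestMonotoneEndingAt hi hlong
      exact ⟨t, hts, .inr ⟨hcard, monotoneOn_toDual_comp_iff.1 hmono⟩⟩
  by_contra! hshort
  let label : ι → ℕ × ℕ := fun i =>
    (longestMonotoneEndingAt f s i, longestMonotoneEndingAt (toDual ∘ f) s i)
  have hmaps : Set.MapsTo label s (Icc 1 m ×ˢ Icc 1 n : Finset (ℕ × ℕ)) := fun i hi => by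
    have := longestMonotoneEndingAt_pos f hi
    have := longestMonotoneEndingAt_pos (toDual ∘ f) hi
    have := hshort i hi
    simp only [label, coe_product, coe_Icc, Set.mem_prod, Set.mem_Icc]
    omega
  have hne {i j : ι} (hi : i ∈ s) (hj : j ∈ s) (hij : i < j) : label i ≠ label j := fun heq =>
    (longestMonotoneEndingAt_lt_or_lt f hi hj hij).elim
      (·.ne (congrArg Prod.fst heq)) (·.ne (congrArg Prod.snd heq))
  have hinj : Set.InjOn label s := fun i hi j hj heq => by
    rcases lt_trichotomy i j with hij | rfl | hji
    exacts [absurd heq (hne hi hj hij), rfl, absurd heq.symm (hne hj hi hji)]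
  have := card_le_card_of_injOn label hmaps hinj
  simp only [card_product, Nat.card_Icc, add_tsub_cancel_right] at this
  omega

theorem exists_card_eq_monotoneOn_or_antitoneOn (f : ι → β) {s : Finset ι} {n : ℕ}
    (h : n * n < s.card) :
    ∃ t ⊆ s, t.card = n + 1 ∧ (MonotoneOn f t ∨ AntitoneOn f t) := by
  obtain ⟨t, hts, ⟨hcard, hmono⟩ | ⟨hcard, hanti⟩⟩ := erdos_szekeres f s n n h
  exacts [⟨t, hts, hcard, .inl hmono⟩, ⟨t, hts, hcard, .inr hanti⟩]

lemma mem_uIcc_of_monotoneOn_or_antitoneOn {f : ι → β} {s : Set ι}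
    (hf : MonotoneOn f s ∨ AntitoneOn f s) {a b c : ι} (ha : a ∈ s) (hb : b ∈ s) (hc : c ∈ s)
    (hab : a ≤ b) (hbc : b ≤ c) : f b ∈ Set.uIcc (f a) (f c) := by
  rcases hf with hf | hf
  · exact Set.mem_uIcc_of_le (hf ha hb hab) (hf hb hc hbc)
  · exact Set.mem_uIcc_of_ge (hf hb hc hbc) (hf ha hb hab)

end ErdosSzekeres

lemma Int.natAbs_sub_eq_add_of_mem_uIcc {a b c : ℤ} (h : b ∈ Set.uIcc a c) :
    (a - c).natAbs = (a - b).natAbs + (b - c).natAbs := by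
  rw [Set.mem_uIcc] at h
  omega

lemma grid3Dist_eq_add_of_mem_uIcc {u v w : ℤ × ℤ × ℤ} (h₁ : v.1 ∈ Set.uIcc u.1 w.1)
    (h₂ : v.2.1 ∈ Set.uIcc u.2.1 w.2.1) (h₃ : v.2.2 ∈ Set.uIcc u.2.2 w.2.2) :
    grid3Dist u w = grid3Dist u v + grid3Dist v w := by
  rw [grid3Dist, grid3Dist, grid3Dist, Int.natAbs_sub_eq_add_of_mem_uIcc h₁,
    Int.natAbs_sub_eq_add_of_mem_uIcc h₂, Int.natAbs_sub_eq_add_of_mem_uIcc h₃]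
  ring

def toLex₃ {α β γ : Type*} : α × β × γ ≃ α ×ₗ β ×ₗ γ :=
  (Equiv.prodCongr (Equiv.refl α) toLex).trans toLex

lemma monotone_fst_toLex₃_symm {α β γ : Type*} [Preorder α] [Preorder β] [Preorder γ] :
    Monotone fun p : α ×ₗ β ×ₗ γ => (toLex₃.symm p).1 :=
  Prod.Lex.monotone_fst_ofLex

theorem exists_geodesic_triple_of_sixteen_lt_card (S : Finset (ℤ × ℤ × ℤ)) (hS : 16 < S.card) :
    ∃ u ∈ S, ∃ v ∈ S, ∃ w ∈ S, u ≠ v ∧ v ≠ w ∧ u ≠ w ∧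
      grid3Dist u w = grid3Dist u v + grid3Dist v w := by
  obtain ⟨T, hTS, hTcard, hy⟩ := exists_card_eq_monotoneOn_or_antitoneOn
    (fun p => (toLex₃.symm p).2.1) (s := S.map toLex₃.toEmbedding) (n := 4) (by simpa using hS)
  obtain ⟨U, hUT, hUcard, hz⟩ := exists_card_eq_monotoneOn_or_antitoneOn
    (fun p => (toLex₃.symm p).2.2) (s := T) (n := 2) (by omega)
  set e := U.orderEmbOfFin hUcard
  have hU (k : Fin 3) : e k ∈ U := orderEmbOfFin_mem U hUcard k
  have hmem (k : Fin 3) : toLex₃.symm (e k) ∈ S := mem_map_equiv.1 (hTS (hUT (hU k)))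
  have hne {k l : Fin 3} (hkl : k ≠ l) : toLex₃.symm (e k) ≠ toLex₃.symm (e l) :=
    toLex₃.symm.injective.ne (e.injective.ne hkl)
  have h01 : e 0 ≤ e 1 := e.monotone (by decide)
  have h12 : e 1 ≤ e 2 := e.monotone (by decide)
  refine ⟨_, hmem 0, _, hmem 1, _, hmem 2, hne (by decide), hne (by decide), hne (by decide),
    grid3Dist_eq_add_of_mem_uIcc ?_ ?_ ?_⟩
  · exact Set.mem_uIcc_of_le (monotone_fst_toLex₃_symm h01) (monotone_fst_toLex₃_symm h12)
  · exact mem_uIcc_of_monotoneOn_or_antitoneOn hy (hUT (hU 0)) (hUT (hU 1)) (hUT (hU 2)) h01 h12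
  · exact mem_uIcc_of_monotoneOn_or_antitoneOn hz (hU 0) (hU 1) (hU 2) h01 h12

theorem card_le_sixteen_of_isGenPosDist {S : Set (ℤ × ℤ × ℤ)} (hS : IsGenPosDist grid3Dist S)
    {T : Finset (ℤ × ℤ × ℤ)} (hT : ↑T ⊆ S) : T.card ≤ 16 := by
  by_contra! hcard
  obtain ⟨u, hu, v, hv, w, hw, huv, hvw, huw, hgeodesic⟩ :=
    exists_geodesic_triple_of_sixteen_lt_card T hcard
  exact hS u (hT hu) v (hT hv) w (hT hw) huv hvw huw hgeodesic

theorem stmt_11 :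
    (∀ S : Finset (ℤ × ℤ × ℤ), S.card = 17 →
      ∃ u ∈ S, ∃ v ∈ S, ∃ w ∈ S, u ≠ v ∧ v ≠ w ∧ u ≠ w ∧
        grid3Dist u w = grid3Dist u v + grid3Dist v w) ∧
    (∀ S : Set (ℤ × ℤ × ℤ), IsGenPosDist grid3Dist S →
      S.Finite ∧ S.ncard ≤ 16) := by
  refine ⟨fun S hS => exists_geodesic_triple_of_sixteen_lt_card S (by omega), fun S hS => ?_⟩
  have hfin : S.Finite := Set.not_infinite.1 fun hinf => by
    obtain ⟨T, hT, hcard⟩ := hinf.exists_subset_card_eq 17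
    have := card_le_sixteen_of_isGenPosDist hS hT
    omega
  refine ⟨hfin, ?_⟩
  rw [Set.ncard_eq_toFinset_card S hfin]
  exact card_le_sixteen_of_isGenPosDist hS (by simp)
end

section
/- For every positive integer k, the general position number of the infinite k-dimensional grid (the graph on ℤ^k with graph distance equal to L¹ distance) is finite. -/
/-!
Record, for every pair of distinct points `p, q`, the sign pattern `i ↦ (p i ≤ q i)`. If
`u → v` and `v → w` have the same pattern, all coordinates are monotone along `u, v, w`, so `v`
lies on a geodesic between `u` and `w`. Hence in a general position set `S` a point `v` is
determined by the set of patterns of the pairs `(v, x)`, `x ∈ S \ {v}`: if `u ≠ v` had the same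
set, the pattern of `(u, v)` would be realised by some `(v, x)`, placing `u, v, x` on a geodesic.
So `|S| ≤ 2 ^ (2 ^ k)`.
-/

/-- Graph distance in the infinite k-dim grid on ℤ^k (L¹ distance). -/
def gridkDist (k : ℕ) (p q : Fin k → ℤ) : ℕ :=
  ∑ i, (p i - q i).natAbs

section Patterns

variable {V C : Type*}

def outPatterns (σ : V → V → C) (S : Set V) (v : V) : Set C :=
  σ v '' (S \ {v})

theorem IsGenPosDist.injOn_outPatterns {d : V → V → ℕ} {S : Set V} (hS : IsGenPosDist d S)
    {σ : V → V → C} (hσ_add : ∀ u v w, σ u v = σ v w → d u w = d u v + d v w)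
    (hσ_swap : ∀ p q, p ≠ q → σ p q ≠ σ q p) :
    Set.InjOn (outPatterns σ S) S := by
  intro u hu v hv huv
  by_contra hne
  have hmem : σ u v ∈ outPatterns σ S v := huv ▸ ⟨v, ⟨hv, Ne.symm hne⟩, rfl⟩
  obtain ⟨x, ⟨hx, hxv⟩, hvx⟩ := hmem
  have hux : u ≠ x := by
    rintro rfl
    exact hσ_swap u v hne hvx.symm
  exact hS u hu v hv x hx hne (Ne.symm hxv) hux (hσ_add u v x hvx.symm)

theorem IsGenPosDist.finite_and_ncard_le [Finite C] {d : V → V → ℕ} {S : Set V}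
    (hS : IsGenPosDist d S) {σ : V → V → C}
    (hσ_add : ∀ u v w, σ u v = σ v w → d u w = d u v + d v w)
    (hσ_swap : ∀ p q, p ≠ q → σ p q ≠ σ q p) :
    S.Finite ∧ S.ncard ≤ Nat.card (Set C) := by
  have hinj := hS.injOn_outPatterns hσ_add hσ_swap
  refine ⟨Set.Finite.of_finite_image (Set.toFinite _) hinj, ?_⟩
  rw [← hinj.ncard_image]
  exact Set.ncard_le_card _

end Patterns

section SignPattern

variable {ι α : Type*} [LinearOrder α]

def signPattern (p q : ι → α) : ι → Bool :=
  fun i => decide (p i ≤ q i)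

theorem signPattern_ne_swap {p q : ι → α} (hpq : p ≠ q) : signPattern p q ≠ signPattern q p := by
  intro h
  apply hpq
  funext i
  have hi := congrFun h i
  simp only [signPattern, decide_eq_decide] at hi
  rcases le_total (p i) (q i) with hle | hle
  · exact le_antisymm hle (hi.mp hle)
  · exact le_antisymm (hi.mpr hle) hle

end SignPattern

theorem gridkDist_eq_add_of_signPattern_eq {k : ℕ} {u v w : Fin k → ℤ}
    (h : signPattern u v = signPattern v w) :
    gridkDist k u w = gridkDist k u v + gridkDist k v w := by
  rw [gridkDist, gridkDist, gridkDist, ← Finset.sum_add_distrib]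
  refine Finset.sum_congr rfl fun i _ => ?_
  have hi := congrFun h i
  simp only [signPattern, decide_eq_decide] at hi
  omega

theorem stmt_13_general (k : ℕ) :
    ∃ N : ℕ, ∀ S : Set (Fin k → ℤ), IsGenPosDist (gridkDist k) S →
      S.Finite ∧ S.ncard ≤ N :=
  ⟨Nat.card (Set (Fin k → Bool)), fun _ hS =>
    hS.finite_and_ncard_le (fun _ _ _ => gridkDist_eq_add_of_signPattern_eq)
      (fun _ _ => signPattern_ne_swap)⟩

/-- The gp-number of the infinite k-dim grid is finite. -/
theorem stmt_13 (k : ℕ) (hk : 0 < k) :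
    ∃ N : ℕ, ∀ S : Set (Fin k → ℤ), IsGenPosDist (gridkDist k) S →
      S.Finite ∧ S.ncard ≤ N :=
  stmt_13_general k
end

section
/- Let S be a general position set of the grid graph P_r □ P_s (vertex set {0,...,r-1} × {0,...,s-1}, graph distance = L¹ distance). If S contains a corner vertex (a vertex of degree 2, e.g., (0,0)), then |S| ≤ 3. -/
/-!
Measuring both coordinates from the corner `c` embeds the grid isometrically into `ℕ × ℕ` with the
L¹ distance, sending `c` to `0`. If `x ≤ y` componentwise then `x` lies on a geodesic from `0` to
`y`, so the remaining points of `S` form an antichain for the product order. Of three points of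
such an antichain, the one with the middle first coordinate also has the middle second coordinate,
hence lies on a geodesic between the other two.
-/

/-- Graph distance in the grid P_r □ P_s (L¹ distance). -/
def pathGridDist {r s : ℕ} (p q : Fin r × Fin s) : ℕ :=
  ((p.1 : ℤ) - (q.1 : ℤ)).natAbs + ((p.2 : ℤ) - (q.2 : ℤ)).natAbs

theorem IsGenPosDist.image {V W : Type*} {d : V → V → ℕ} {d' : W → W → ℕ} {S : Set V}
    (hS : IsGenPosDist d S) {f : V → W} (hf : Function.Injective f)
    (hd : ∀ u v, d' (f u) (f v) = d u v) : IsGenPosDist d' (f '' S) := by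
  rintro _ ⟨u, hu, rfl⟩ _ ⟨v, hv, rfl⟩ _ ⟨w, hw, rfl⟩ huv hvw huw
  simpa only [hd] using hS u hu v hv w hw (hf.ne_iff.mp huv) (hf.ne_iff.mp hvw) (hf.ne_iff.mp huw)

def l1Dist (p q : ℕ × ℕ) : ℕ :=
  ((p.1 : ℤ) - (q.1 : ℤ)).natAbs + ((p.2 : ℤ) - (q.2 : ℤ)).natAbs

theorem l1Dist_zero_left_eq_add (p q : ℕ × ℕ) (hpq : p ≤ q) :
    l1Dist 0 q = l1Dist 0 p + l1Dist p q := by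
  obtain ⟨h1, h2⟩ := Prod.mk_le_mk.mp hpq
  simp only [l1Dist, Prod.fst_zero, Prod.snd_zero]
  omega

theorem l1Dist_between_of_incomparable (x y z : ℕ × ℕ)
    (hxy : ¬ x ≤ y) (hyx : ¬ y ≤ x) (hxz : ¬ x ≤ z) (hzx : ¬ z ≤ x)
    (hyz : ¬ y ≤ z) (hzy : ¬ z ≤ y) :
    l1Dist x z = l1Dist x y + l1Dist y z ∨ l1Dist x y = l1Dist x z + l1Dist z y ∨
      l1Dist y z = l1Dist y x + l1Dist x z := by
  simp only [Prod.le_def, not_and_or, not_le] at *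
  simp only [l1Dist]
  omega

theorem card_le_three_of_zero_mem (S : Finset (ℕ × ℕ))
    (hS : IsGenPosDist l1Dist (S : Set (ℕ × ℕ))) (h0 : 0 ∈ S) : S.card ≤ 3 := by
  have incomparable : ∀ x ∈ S.erase 0, ∀ y ∈ S.erase 0, x ≠ y → ¬ x ≤ y := by
    intro x hx y hy hxy hle
    obtain ⟨hx0, hxS⟩ := Finset.mem_erase.mp hx
    obtain ⟨hy0, hyS⟩ := Finset.mem_erase.mp hy
    exact hS 0 h0 x hxS y hyS hx0.symm hxy hy0.symm (l1Dist_zero_left_eq_add x y hle)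
  have hcard : (S.erase 0).card ≤ 2 := by
    by_contra! h
    obtain ⟨x, y, z, hx, hy, hz, hxy, hxz, hyz⟩ := Finset.two_lt_card_iff.mp h
    have mem : ∀ {x}, x ∈ S.erase 0 → x ∈ S := Finset.mem_of_mem_erase
    rcases l1Dist_between_of_incomparable x y z (incomparable x hx y hy hxy)
        (incomparable y hy x hx hxy.symm) (incomparable x hx z hz hxz)
        (incomparable z hz x hx hxz.symm) (incomparable y hy z hz hyz)
        (incomparable z hz y hy hyz.symm) with h | h | h
    · exact hS x (mem hx) y (mem hy) z (mem hz) hxy hyz hxz h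
    · exact hS x (mem hx) z (mem hz) y (mem hy) hxz hyz.symm hxy h
    · exact hS y (mem hy) x (mem hx) z (mem hz) hxy.symm hxz hyz h
  have := Finset.card_erase_of_mem h0
  omega

def cornerCoords {r s : ℕ} (c p : Fin r × Fin s) : ℕ × ℕ :=
  (((c.1 : ℤ) - (p.1 : ℤ)).natAbs, ((c.2 : ℤ) - (p.2 : ℤ)).natAbs)

theorem cornerCoords_self {r s : ℕ} (c : Fin r × Fin s) : cornerCoords c c = 0 := by
  simp [cornerCoords]

section Corner

variable {r s : ℕ} {c : Fin r × Fin s}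
  (hc1 : (c.1 : ℕ) = 0 ∨ (c.1 : ℕ) = r - 1) (hc2 : (c.2 : ℕ) = 0 ∨ (c.2 : ℕ) = s - 1)
include hc1 hc2

theorem l1Dist_cornerCoords (p q : Fin r × Fin s) :
    l1Dist (cornerCoords c p) (cornerCoords c q) = pathGridDist p q := by
  have := p.1.isLt; have := q.1.isLt; have := p.2.isLt; have := q.2.isLt
  simp only [l1Dist, cornerCoords, pathGridDist]
  omega

theorem cornerCoords_injective : Function.Injective (cornerCoords c) := by
  intro p q hpq
  have := p.1.isLt; have := q.1.isLt; have := p.2.isLt; have := q.2.isLt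
  obtain ⟨h1, h2⟩ := Prod.mk.inj hpq
  ext <;> omega

end Corner

theorem stmt_14_general {r s : ℕ}
    (S : Finset (Fin r × Fin s))
    (hS : IsGenPosDist pathGridDist (S : Set (Fin r × Fin s)))
    (hcorner : ∃ c ∈ S, ((c.1 : ℕ) = 0 ∨ (c.1 : ℕ) = r - 1) ∧
                        ((c.2 : ℕ) = 0 ∨ (c.2 : ℕ) = s - 1)) :
    S.card ≤ 3 := by
  obtain ⟨c, hc, hc1, hc2⟩ := hcorner
  have hinj := cornerCoords_injective hc1 hc2
  have hS' : IsGenPosDist l1Dist ((S.image (cornerCoords c) : Finset _) : Set (ℕ × ℕ)) := by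
    rw [Finset.coe_image]
    exact hS.image hinj (l1Dist_cornerCoords hc1 hc2)
  have h0 : 0 ∈ S.image (cornerCoords c) :=
    Finset.mem_image.mpr ⟨c, hc, cornerCoords_self c⟩
  rw [← Finset.card_image_of_injective S hinj]
  exact card_le_three_of_zero_mem _ hS' h0

/-- A general position set of P_r □ P_s containing a corner vertex has at
most 3 vertices. -/
theorem stmt_14 {r s : ℕ} (hr : 2 ≤ r) (hs : 2 ≤ s)
    (S : Finset (Fin r × Fin s))
    (hS : IsGenPosDist pathGridDist (S : Set (Fin r × Fin s)))
    (hcorner : ∃ c ∈ S, ((c.1 : ℕ) = 0 ∨ (c.1 : ℕ) = r - 1) ∧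
                        ((c.2 : ℕ) = 0 ∨ (c.2 : ℕ) = s - 1)) :
    S.card ≤ 3 :=
  stmt_14_general S hS hcorner
end

section
/- If R is a general position set of a connected graph G and v ∈ R, then |R| ≤ ip(v,G) + 1, where ip(v,G) is the minimum number of geodesics of G, all starting at v, whose union covers all vertices of G. -/
/-!
Any two vertices `x`, `y` on a geodesic starting at `v` are ordered along it, so one of them lies
on a geodesic from `v` to the other: `d(v,y) = d(v,x) + d(x,y)` or `d(v,x) = d(v,y) + d(y,x)`.
In a general position set containing `v` this forces `x = y` whenever `x, y ≠ v`, so each geodesic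
of the cover meets `R \ {v}` at most once, and choosing for every vertex a geodesic through it
injects `R \ {v}` into the cover.
-/

namespace SimpleGraph.Walk

variable {V : Type*} {G : SimpleGraph V} {u w x y : V}

theorem length_eq_dist_of_length_append_eq_dist {q : G.Walk u x} {r : G.Walk x w}
    (h : (q.append r).length = G.dist u w) :
    q.length = G.dist u x ∧ r.length = G.dist x w := by
  have hq := dist_le q
  have hr := dist_le r
  have htriangle := q.reachable.dist_triangle_left w
  rw [length_append] at h
  omega

theorem dist_add_dist_of_mem_support {p : G.Walk u w} (hp : p.length = G.dist u w)
    (hx : x ∈ p.support) : G.dist u x + G.dist x w = G.dist u w := by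
  obtain ⟨q, r, rfl⟩ := mem_support_iff_exists_append.mp hx
  obtain ⟨hq, hr⟩ := length_eq_dist_of_length_append_eq_dist hp
  rw [← hq, ← hr, ← length_append, hp]

theorem dist_eq_add_or_dist_eq_add_of_mem_support {p : G.Walk u w}
    (hp : p.length = G.dist u w) (hx : x ∈ p.support) (hy : y ∈ p.support) :
    G.dist u y = G.dist u x + G.dist x y ∨ G.dist u x = G.dist u y + G.dist y x := by
  have hyw := dist_add_dist_of_mem_support hp hy
  obtain ⟨q, r, rfl⟩ := mem_support_iff_exists_append.mp hx
  obtain ⟨hq, hr⟩ := length_eq_dist_of_length_append_eq_dist hp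
  rcases (mem_support_append_iff q r).mp hy with hyq | hyr
  · exact Or.inr (dist_add_dist_of_mem_support hq hyq).symm
  · have hxyw := dist_add_dist_of_mem_support hr hyr
    rw [length_append] at hp
    left
    omega

end SimpleGraph.Walk

theorem IsGenPos.eq_of_mem_support {V : Type*} {G : SimpleGraph V} {R : Set V}
    (hR : IsGenPos G R) {v w x y : V} {p : G.Walk v w} (hp : p.length = G.dist v w)
    (hv : v ∈ R) (hx : x ∈ R) (hy : y ∈ R) (hxv : x ≠ v) (hyv : y ≠ v)
    (hxp : x ∈ p.support) (hyp : y ∈ p.support) : x = y := by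
  by_contra hxy
  rcases SimpleGraph.Walk.dist_eq_add_or_dist_eq_add_of_mem_support hp hxp hyp with h | h
  · exact hR v hv x hx y hy hxv.symm hxy hyv.symm h
  · exact hR v hv y hy x hx hyv.symm (Ne.symm hxy) hxv.symm h

theorem stmt_17_general {V : Type*} (G : SimpleGraph V)
    (R : Finset V) (hR : IsGenPos G (R : Set V)) (v : V) (hv : v ∈ R)
    (n : ℕ) (ends : Fin n → V) (P : ∀ i, G.Walk v (ends i))
    (hgeo : ∀ i, (P i).length = G.dist v (ends i))
    (hcover : ∀ u : V, ∃ i, u ∈ (P i).support) :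
    R.card ≤ n + 1 := by
  classical
  choose idx hidx using hcover
  have hinj : Set.InjOn idx (R.erase v : Set V) := fun x hx y hy hxy => by
    rw [Finset.mem_coe, Finset.mem_erase] at hx hy
    exact hR.eq_of_mem_support (hgeo (idx x)) hv hx.2 hy.2 hx.1 hy.1 (hidx x) (hxy ▸ hidx y)
  calc R.card = (R.erase v).card + 1 := (Finset.card_erase_add_one hv).symm
    _ ≤ (Finset.univ : Finset (Fin n)).card + 1 := by
      gcongr
      exact Finset.card_le_card_of_injOn idx (fun _ _ => Finset.mem_univ _) hinj
    _ = n + 1 := by rw [Finset.card_univ, Fintype.card_fin]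

/-- If R is a general position set, v ∈ R, and there is a cover of V(G) by n
geodesics all starting at v, then |R| ≤ n + 1.  (Hence |R| ≤ ip(v,G) + 1.) -/
theorem stmt_17 {V : Type*} (G : SimpleGraph V) (hG : G.Connected)
    (R : Finset V) (hR : IsGenPos G (R : Set V)) (v : V) (hv : v ∈ R)
    (n : ℕ) (ends : Fin n → V) (P : ∀ i, G.Walk v (ends i))
    (hgeo : ∀ i, (P i).length = G.dist v (ends i))
    (hcover : ∀ u : V, ∃ i, u ∈ (P i).support) :
    R.card ≤ n + 1 :=
  stmt_17_general G R hR v hv n ends P hgeo hcover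
end

section
/- For every r ≥ 1, the general position number of the r-dimensional Beneš network BN(r) equals 2^{r+1}. -/
/-- The bit position used between level `ℓ` and level `ℓ+1` of the
r-dimensional Beneš network (levels `0, …, 2r`): the first butterfly uses
bit `ℓ` for `ℓ < r`, and the mirrored back-to-back butterfly uses bit
`2r - 1 - ℓ` for `r ≤ ℓ < 2r`. -/
def benesBit (r ℓ : ℕ) : ℕ := if ℓ < r then ℓ else 2 * r - 1 - ℓ

/-- The r-dimensional Beneš network BN(r): vertices are pairs `(w, i)` where
`w : Fin r → Bool` is the column and `i` is the level (`0 ≤ i ≤ 2r`).  A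
vertex at level `i` is adjacent to a vertex at level `i+1` iff their columns
are identical or differ exactly in the bit position `benesBit r i`. -/
def BenesNetwork (r : ℕ) : SimpleGraph ((Fin r → Bool) × Fin (2 * r + 1)) :=
  SimpleGraph.fromRel (fun u v =>
    (v.2 : ℕ) = (u.2 : ℕ) + 1 ∧
      (u.1 = v.1 ∨
        ∃ j : Fin r, (j : ℕ) = benesBit r (u.2 : ℕ) ∧
          v.1 = Function.update u.1 j (! u.1 j)))

/-! Within one column the distance is the level difference, so three vertices of a column lie on
a geodesic and a general position set meets each of the `2 ^ r` columns at most twice.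
Conversely, on the two outer levels the distance is an ultrametric: vertices on opposite outer
levels are at distance `2r`, and vertices `(a, ℓ)`, `(b, ℓ)` on the same outer level are at
distance `2k`, where `k` is the lowest level of the butterfly at which the columns `a` and `b` can
meet. A set of distinct points on which a graph metric is ultrametric is in general position,
since `d(u, w) ≤ max (d(u, v), d(v, w)) < d(u, v) + d(v, w)`. -/

namespace SimpleGraph

variable {V W : Type*} {G : SimpleGraph V} {H : SimpleGraph W}

theorem edist_map_le (f : G →g H) (u v : V) : H.edist (f u) (f v) ≤ G.edist u v := by
  by_cases h : G.Reachable u v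
  · obtain ⟨p, hp⟩ := h.exists_walk_length_eq_edist
    simpa [hp] using edist_le (p.map f)
  · simp [edist_eq_top_of_not_reachable h]

theorem Iso.dist_eq (f : G ≃g H) (u v : V) : H.dist (f u) (f v) = G.dist u v := by
  refine congrArg ENat.toNat (le_antisymm (edist_map_le f.toHom u v) ?_)
  simpa using edist_map_le f.symm.toHom (f u) (f v)

theorem Walk.le_add_length {f : V → ℕ} (hf : ∀ ⦃u v⦄, G.Adj u v → f v ≤ f u + 1)
    {u v : V} (p : G.Walk u v) : f v ≤ f u + p.length := by
  induction p with
  | nil => simp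
  | cons h _ ih =>
    have := hf h
    simp only [Walk.length_cons]
    omega

theorem Walk.two_mul_le_add_length [DecidableEq V] {f : V → ℕ}
    (hf : ∀ ⦃u v⦄, G.Adj u v → f v ≤ f u + 1) {u v z : V} (p : G.Walk u v)
    (hz : z ∈ p.support) : 2 * f z ≤ f u + f v + p.length := by
  have h₁ := (p.takeUntil z hz).le_add_length hf
  have h₂ := (p.dropUntil z hz).reverse.le_add_length hf
  have h := congrArg Walk.length (p.take_spec hz)
  rw [Walk.length_append] at h
  rw [Walk.length_reverse] at h₂
  omega

theorem Walk.apply_eq_of_forall_mem_support {α : Type*} {P : V → Prop} {g : V → α}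
    (hg : ∀ ⦃u v⦄, G.Adj u v → P u → P v → g u = g v) {u v : V} (p : G.Walk u v)
    (hp : ∀ z ∈ p.support, P z) : g u = g v := by
  induction p with
  | nil => rfl
  | cons h q ih =>
    simp only [Walk.support_cons, List.mem_cons, forall_eq_or_imp] at hp
    exact (hg h hp.1 (hp.2 _ q.start_mem_support)).trans (ih hp.2)

theorem IsGenPos.mono {S T : Set V} (hS : IsGenPos G S) (hTS : T ⊆ S) : IsGenPos G T :=
  fun u hu v hv w hw => hS u (hTS hu) v (hTS hv) w (hTS hw)

theorem isGenPos_of_dist_le_max (hG : G.Connected) {S : Set V}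
    (h : ∀ u ∈ S, ∀ v ∈ S, ∀ w ∈ S, G.dist u w ≤ max (G.dist u v) (G.dist v w)) :
    IsGenPos G S := by
  intro u hu v hv w hw huv hvw _
  have := hG.pos_dist_of_ne huv
  have := hG.pos_dist_of_ne hvw
  have := h u hu v hv w hw
  omega

theorem IsGenPos.card_le_two {s : Finset V} (hs : IsGenPos G s) (f : V → ℤ)
    (hf : ∀ x ∈ s, ∀ y ∈ s, G.dist x y = (f x - f y).natAbs) (hinj : Set.InjOn f s) :
    s.card ≤ 2 := by
  by_contra! h
  obtain ⟨a, ha, b, hb, c, hc, hab, hac, hbc⟩ := Finset.two_lt_card.mp h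
  have hab' : f a ≠ f b := fun h => hab (hinj ha hb h)
  have hac' : f a ≠ f c := fun h => hac (hinj ha hc h)
  have hbc' : f b ≠ f c := fun h => hbc (hinj hb hc h)
  have key : G.dist a c = G.dist a b + G.dist b c ∨ G.dist b c = G.dist b a + G.dist a c ∨
      G.dist a b = G.dist a c + G.dist c b := by
    rw [hf a ha b hb, hf a ha c hc, hf b hb c hc, hf b hb a ha, hf c hc b hb]
    omega
  rcases key with key | key | key
  · exact hs a ha b hb c hc hab hbc hac key
  · exact hs b hb a ha c hc (Ne.symm hab) hac hbc key
  · exact hs a ha c hc b hb hac (Ne.symm hbc) hab key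

end SimpleGraph

namespace BenesNetwork

open SimpleGraph

variable {r : ℕ}

abbrev Vertex (r : ℕ) := (Fin r → Bool) × Fin (2 * r + 1)

def IsUpStep (u v : Vertex r) : Prop :=
  (v.2 : ℕ) = u.2 + 1 ∧ ∀ k : Fin r, (k : ℕ) ≠ benesBit r u.2 → u.1 k = v.1 k

theorem benesBit_lt {ℓ : ℕ} (h : ℓ < 2 * r) : benesBit r ℓ < r := by
  unfold benesBit
  split_ifs <;> omega

theorem benesBit_two_mul_sub_one_sub {ℓ : ℕ} (h : ℓ < 2 * r) :
    benesBit r (2 * r - 1 - ℓ) = benesBit r ℓ := by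
  unfold benesBit
  split_ifs <;> omega

theorem isUpStep_iff {u v : Vertex r} :
    IsUpStep u v ↔ (v.2 : ℕ) = u.2 + 1 ∧
      (u.1 = v.1 ∨ ∃ j : Fin r, (j : ℕ) = benesBit r u.2 ∧
        v.1 = Function.update u.1 j (! u.1 j)) := by
  refine and_congr_right fun hlev => ⟨fun h => ?_, ?_⟩
  · let j : Fin r := ⟨benesBit r u.2, benesBit_lt (by omega)⟩
    by_cases hj : u.1 j = v.1 j
    · refine .inl (funext fun k => ?_)
      by_cases hk : k = j
      · rw [hk, hj]
      · exact h k fun h' => hk (Fin.ext h')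
    · refine .inr ⟨j, rfl, funext fun k => ?_⟩
      by_cases hk : k = j
      · rw [hk, Function.update_self]
        exact Bool.eq_not_iff.mpr (Ne.symm hj)
      · rw [Function.update_of_ne hk]
        exact (h k fun h' => hk (Fin.ext h')).symm
  · rintro (h | ⟨j, hj, h⟩) k hk
    · rw [h]
    · rw [h, Function.update_of_ne fun h' => hk (by rw [h']; exact hj)]

theorem adj_iff {u v : Vertex r} : (BenesNetwork r).Adj u v ↔ IsUpStep u v ∨ IsUpStep v u := by
  rw [BenesNetwork, fromRel_adj, isUpStep_iff, isUpStep_iff]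
  refine and_iff_right_of_imp fun h huv => ?_
  subst huv
  omega

theorem level_le_of_adj {u v : Vertex r} (h : (BenesNetwork r).Adj u v) :
    (v.2 : ℕ) ≤ u.2 + 1 := by
  rcases adj_iff.mp h with h | h <;> have := h.1 <;> omega

theorem apply_eq_of_adj {u v : Vertex r} (h : (BenesNetwork r).Adj u v) (j : Fin r)
    (hu : (u.2 : ℕ) ≤ j) (hv : (v.2 : ℕ) ≤ j) : u.1 j = v.1 j := by
  have hlt : ∀ ℓ < (j : ℕ), benesBit r ℓ ≠ j := fun ℓ hℓ => by
    unfold benesBit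
    split_ifs <;> omega
  rcases adj_iff.mp h with ⟨hlev, h⟩ | ⟨hlev, h⟩
  · exact h j (hlt _ (by omega)).symm
  · exact (h j (hlt _ (by omega)).symm).symm

theorem exists_walk_same_column (w : Fin r → Bool) {i j : Fin (2 * r + 1)} (hij : i ≤ j) :
    ∃ p : (BenesNetwork r).Walk (w, i) (w, j), p.length = j - i := by
  induction j using Fin.induction with
  | zero =>
    obtain rfl := Fin.le_zero_iff.mp hij
    exact ⟨.nil, by simp⟩
  | succ k ih =>
    rcases hij.eq_or_lt with rfl | hlt
    · exact ⟨.nil, by simp⟩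
    obtain ⟨p, hp⟩ := ih (Fin.le_castSucc_iff.mpr hlt)
    have hstep : (BenesNetwork r).Adj (w, k.castSucc) (w, k.succ) :=
      adj_iff.mpr (.inl ⟨by simp, fun _ _ => rfl⟩)
    refine ⟨p.concat hstep, ?_⟩
    rw [Fin.lt_def, Fin.val_succ] at hlt
    simp only [Walk.length_concat, hp, Fin.val_castSucc, Fin.val_succ]
    omega

theorem exists_walk_up (a b : Fin r → Bool) {k : Fin (2 * r + 1)} (hk : (k : ℕ) ≤ r)
    (hab : ∀ j : Fin r, (k : ℕ) ≤ j → a j = b j) :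
    ∃ p : (BenesNetwork r).Walk (a, 0) (b, k), p.length = k := by
  induction k using Fin.induction generalizing b with
  | zero =>
    obtain rfl : a = b := funext fun j => hab j (by simp)
    exact ⟨.nil, rfl⟩
  | succ k ih =>
    have hkr : (k : ℕ) < r := by simp at hk; omega
    let jk : Fin r := ⟨k, hkr⟩
    obtain ⟨p, hp⟩ := ih (Function.update b jk (a jk)) (by simp; omega) fun j hj => by
      rcases eq_or_ne j jk with rfl | hne
      · rw [Function.update_self]
      · rw [Function.update_of_ne hne]
        have := Fin.val_ne_of_ne hne
        exact hab j (by simp [jk] at this hj ⊢; omega)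
    have hstep : (BenesNetwork r).Adj (Function.update b jk (a jk), k.castSucc) (b, k.succ) := by
      refine adj_iff.mpr (.inl ⟨by simp, fun j hj => Function.update_of_ne ?_ _ _⟩)
      simp only [Fin.val_castSucc, benesBit, if_pos hkr] at hj
      exact fun h => hj (h ▸ rfl)
    exact ⟨p.concat hstep, by simp [hp]⟩

theorem connected : (BenesNetwork r).Connected where
  preconnected := by
    let hub : Vertex r := (fun _ => false, ⟨r, by omega⟩)
    have h : ∀ x : Vertex r, (BenesNetwork r).Reachable hub x := fun x => by
      obtain ⟨p, -⟩ := exists_walk_up x.1 hub.1 (k := hub.2) le_rfl fun j hj => by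
        simp [hub] at hj; omega
      obtain ⟨q, -⟩ := exists_walk_same_column x.1 (Fin.zero_le x.2)
      exact p.reverse.reachable.trans q.reachable
    exact fun x y => (h x).symm.trans (h y)

theorem level_le_level_add_dist (x y : Vertex r) :
    (y.2 : ℕ) ≤ x.2 + (BenesNetwork r).dist x y := by
  obtain ⟨p, hp⟩ := connected.exists_walk_length_eq_dist x y
  exact hp ▸ p.le_add_length (f := fun z => z.2) fun _ _ => level_le_of_adj

theorem dist_same_column (w : Fin r → Bool) (i j : Fin (2 * r + 1)) :
    (BenesNetwork r).dist (w, i) (w, j) = ((i : ℤ) - j).natAbs := by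
  wlog hij : i ≤ j generalizing i j
  · rw [dist_comm, this j i (le_of_not_ge hij)]
    omega
  obtain ⟨p, hp⟩ := exists_walk_same_column w hij
  have hle := hp ▸ dist_le p
  have hge := level_le_level_add_dist (w, i) (w, j)
  rw [Fin.le_def] at hij
  simp only at hge
  omega

/-- One more than the highest bit in which `a` and `b` differ (`0` if `a = b`). The first
butterfly flips the bits in increasing order, so this is the lowest level at which the upward
paths from `(a, 0)` and `(b, 0)` can meet. -/
def mergeLevel (a b : Fin r → Bool) : ℕ :=
  ({j | a j ≠ b j} : Finset (Fin r)).sup fun j => (j : ℕ) + 1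

theorem mergeLevel_le (a b : Fin r → Bool) : mergeLevel a b ≤ r :=
  Finset.sup_le fun j _ => j.isLt

theorem lt_mergeLevel_of_apply_ne {a b : Fin r → Bool} {j : Fin r} (h : a j ≠ b j) :
    (j : ℕ) < mergeLevel a b :=
  Finset.le_sup (f := fun j : Fin r => (j : ℕ) + 1) (by simpa using h)

theorem apply_eq_of_mergeLevel_le {a b : Fin r → Bool} {j : Fin r} (h : mergeLevel a b ≤ j) :
    a j = b j :=
  not_not.mp fun hj => (lt_mergeLevel_of_apply_ne hj).not_ge h

theorem exists_apply_ne_of_mergeLevel_ne_zero {a b : Fin r → Bool} (h : mergeLevel a b ≠ 0) :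
    ∃ j : Fin r, a j ≠ b j ∧ (j : ℕ) + 1 = mergeLevel a b := by
  have hne : ({j | a j ≠ b j} : Finset (Fin r)).Nonempty :=
    Finset.nonempty_iff_ne_empty.mpr fun h' => h (by simp [mergeLevel, h'])
  obtain ⟨j, hj, hsup⟩ := Finset.exists_mem_eq_sup _ hne fun j : Fin r => (j : ℕ) + 1
  exact ⟨j, (Finset.mem_filter.mp hj).2, hsup.symm⟩

theorem mergeLevel_le_max (a b c : Fin r → Bool) :
    mergeLevel a c ≤ max (mergeLevel a b) (mergeLevel b c) := by
  refine Finset.sup_le fun j hj => ?_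
  have hac : a j ≠ c j := (Finset.mem_filter.mp hj).2
  by_cases hab : a j = b j
  · exact le_max_of_le_right (lt_mergeLevel_of_apply_ne (hab ▸ hac))
  · exact le_max_of_le_left (lt_mergeLevel_of_apply_ne hab)

theorem dist_bottom (a b : Fin r → Bool) :
    (BenesNetwork r).dist (a, 0) (b, 0) = 2 * mergeLevel a b := by
  let k : Fin (2 * r + 1) := ⟨mergeLevel a b, by have := mergeLevel_le a b; omega⟩
  apply le_antisymm
  · obtain ⟨p, hp⟩ := exists_walk_up a b (k := k) (mergeLevel_le a b)
      fun j hj => apply_eq_of_mergeLevel_le hj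
    obtain ⟨q, hq⟩ := exists_walk_same_column b (Fin.zero_le k)
    have := dist_le (p.append q.reverse)
    simp only [Walk.length_append, Walk.length_reverse, hp, hq] at this
    simp [k] at this
    omega
  by_cases h0 : mergeLevel a b = 0
  · omega
  obtain ⟨j, hj, hjm⟩ := exists_apply_ne_of_mergeLevel_ne_zero h0
  obtain ⟨p, hp⟩ := connected.exists_walk_length_eq_dist (a, 0) (b, 0)
  -- a geodesic from `(a, 0)` to `(b, 0)` must climb above level `j` to flip bit `j`
  obtain ⟨z, hz, hzj⟩ : ∃ z ∈ p.support, (j : ℕ) < z.2 := by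
    by_contra! hlow
    exact hj (p.apply_eq_of_forall_mem_support (P := fun z => (z.2 : ℕ) ≤ j)
      (g := fun z => z.1 j) (fun _ _ h => apply_eq_of_adj h j) hlow)
  have := p.two_mul_le_add_length (f := fun z => z.2) (fun _ _ => level_le_of_adj) hz
  simp only [Fin.val_zero] at this
  omega

theorem dist_bottom_top (a b : Fin r → Bool) :
    (BenesNetwork r).dist (a, 0) (b, Fin.last (2 * r)) = 2 * r := by
  apply le_antisymm
  · let mid : Fin (2 * r + 1) := ⟨r, by omega⟩
    obtain ⟨p, hp⟩ := exists_walk_up a b (k := mid) le_rfl fun j hj => by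
      simp [mid] at hj; omega
    obtain ⟨q, hq⟩ := exists_walk_same_column b (Fin.le_last mid)
    have := dist_le (p.append q)
    simp only [Walk.length_append, hp, hq, Fin.val_last] at this
    simp [mid] at this
    omega
  · simpa using level_le_level_add_dist (a, 0) (b, Fin.last (2 * r))

theorem isUpStep_rev {u v : Vertex r} (h : IsUpStep u v) :
    IsUpStep (v.1, v.2.rev) (u.1, u.2.rev) := by
  obtain ⟨hlev, hcol⟩ := h
  have hv := v.2.isLt
  refine ⟨by simp only [Fin.val_rev]; omega, fun k hk => (hcol k ?_).symm⟩
  have : 2 * r + 1 - (v.2 + 1) = 2 * r - 1 - u.2 := by omega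
  rwa [Fin.val_rev, this, benesBit_two_mul_sub_one_sub (by omega)] at hk

def levelRev : BenesNetwork r ≃g BenesNetwork r where
  toEquiv := (Equiv.refl _).prodCongr Fin.revPerm
  map_rel_iff' {u v} := by
    have key : ∀ u v : Vertex r, (BenesNetwork r).Adj u v →
        (BenesNetwork r).Adj (u.1, u.2.rev) (v.1, v.2.rev) := fun u v h => by
      rcases adj_iff.mp h with h | h
      · exact adj_iff.mpr (.inr (isUpStep_rev h))
      · exact adj_iff.mpr (.inl (isUpStep_rev h))
    refine ⟨fun h => ?_, key u v⟩
    simpa using key _ _ h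

theorem dist_top (a b : Fin r → Bool) :
    (BenesNetwork r).dist (a, Fin.last (2 * r)) (b, Fin.last (2 * r)) = 2 * mergeLevel a b := by
  rw [← dist_bottom, ← levelRev.dist_eq]
  simp [levelRev]

def outerLevels (r : ℕ) : Finset (Vertex r) := Finset.univ ×ˢ {0, Fin.last (2 * r)}

theorem card_outerLevels (hr : 1 ≤ r) : (outerLevels r).card = 2 ^ (r + 1) := by
  have h0 : (0 : Fin (2 * r + 1)) ≠ Fin.last (2 * r) := by
    rw [Ne, Fin.ext_iff, Fin.val_last]; simp; omega
  rw [outerLevels, Finset.card_product, Finset.card_pair h0, Finset.card_univ]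
  simp [pow_succ]

theorem dist_of_mem_outerLevels {x y : Vertex r} (hx : x ∈ outerLevels r)
    (hy : y ∈ outerLevels r) :
    (BenesNetwork r).dist x y = if x.2 = y.2 then 2 * mergeLevel x.1 y.1 else 2 * r := by
  obtain ⟨a, i⟩ := x
  obtain ⟨b, j⟩ := y
  simp only [outerLevels, Finset.mem_product, Finset.mem_univ, Finset.mem_insert,
    Finset.mem_singleton, true_and] at hx hy
  have := mergeLevel_le a b
  dsimp only
  rcases hx with rfl | rfl <;> rcases hy with rfl | rfl
  · simp [dist_bottom]
  · rw [dist_bottom_top]; split_ifs with h <;> [skip; rfl]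
    rw [Fin.ext_iff, Fin.val_last] at h; simp at h; omega
  · rw [SimpleGraph.dist_comm, dist_bottom_top]; split_ifs with h <;> [skip; rfl]
    rw [Fin.ext_iff, Fin.val_last] at h; simp at h; omega
  · simp [dist_top]

theorem dist_le_max_of_mem_outerLevels {x y z : Vertex r} (hx : x ∈ outerLevels r)
    (hy : y ∈ outerLevels r) (hz : z ∈ outerLevels r) :
    (BenesNetwork r).dist x z ≤ max ((BenesNetwork r).dist x y) ((BenesNetwork r).dist y z) := by
  rw [dist_of_mem_outerLevels hx hz, dist_of_mem_outerLevels hx hy,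
    dist_of_mem_outerLevels hy hz]
  have := mergeLevel_le_max x.1 y.1 z.1
  have := mergeLevel_le x.1 z.1
  split_ifs <;> omega

theorem isGenPos_outerLevels : IsGenPos (BenesNetwork r) (outerLevels r : Set (Vertex r)) :=
  isGenPos_of_dist_le_max connected fun _ hx _ hy _ hz => dist_le_max_of_mem_outerLevels hx hy hz

theorem card_le_of_isGenPos {S : Finset (Vertex r)} (hS : IsGenPos (BenesNetwork r) S) :
    S.card ≤ 2 ^ (r + 1) := by
  have hcolumn : ∀ w ∈ S.image Prod.fst, {x ∈ S | x.1 = w}.card ≤ 2 := fun w _ => by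
    refine (hS.mono (Finset.coe_subset.mpr (Finset.filter_subset _ S))).card_le_two
      (fun x => (x.2 : ℤ)) (fun x hx y hy => ?_) ?_
    · simp only [Finset.mem_filter] at hx hy
      rw [← Prod.mk.eta (p := x), ← Prod.mk.eta (p := y), hx.2, hy.2, dist_same_column]
    · intro x hx y hy hxy
      simp only [Finset.mem_coe, Finset.mem_filter] at hx hy
      exact Prod.ext (hx.2.trans hy.2.symm) (Fin.ext (by simpa using hxy))
  calc S.card ≤ 2 * (S.image Prod.fst).card := Finset.card_le_mul_card_image S 2 hcolumn
    _ ≤ 2 * 2 ^ r := by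
      gcongr
      simpa using Finset.card_le_univ (S.image Prod.fst)
    _ = 2 ^ (r + 1) := by ring

end BenesNetwork

/-- gp(BN(r)) = 2^{r+1}. -/
theorem stmt_18 (r : ℕ) (hr : 1 ≤ r) :
    (∃ S : Finset ((Fin r → Bool) × Fin (2 * r + 1)),
      IsGenPos (BenesNetwork r) (S : Set ((Fin r → Bool) × Fin (2 * r + 1))) ∧
      S.card = 2 ^ (r + 1)) ∧
    (∀ S : Finset ((Fin r → Bool) × Fin (2 * r + 1)),
      IsGenPos (BenesNetwork r) (S : Set ((Fin r → Bool) × Fin (2 * r + 1))) →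
      S.card ≤ 2 ^ (r + 1)) :=
  ⟨⟨BenesNetwork.outerLevels r, BenesNetwork.isGenPos_outerLevels,
    BenesNetwork.card_outerLevels hr⟩, fun _ => BenesNetwork.card_le_of_isGenPos⟩
end
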